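/- Let γ = (a, b; c, d) ∈ SL₂(ℤ) with c > 0 and c ≡ 2 (mod 4), and let α, β ∈ {0,1}. Let M be the 2×2 complex matrix M = [[0, i^{ab}], [1, 0]]. Then ε_a^{−1} · (c/a) · M_{αβ} = (1/4) Σ_{δ} (c/δ) ε_δ^{−1} e(α(a−δ̄)/(4c)) e(β(d−δ)/(4c)), where δ runs over the odd residues modulo 4c with δ ≡ d (mod c), δ̄ denotes the inverse of δ modulo 4c, (c/a) and (c/δ) are Jacobi symbols (a is odd since ad − bc = 1 and c is even), ε_x := 1 if x ≡ 1 (mod 4) and i if x ≡ 3 (mod 4), and e(x) := e^{2πix}. -/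

import Mathlib

open Complex

/-- `e(x) = e^{2πix}`. -/
noncomputable def eE (x : ℂ) : ℂ := Complex.exp (2 * Real.pi * Complex.I * x)

/-- `ε_d = 1` if `d ≡ 1 (mod 4)`, `ε_d = i` if `d ≡ 3 (mod 4)` (for odd `d : ℕ`). -/
noncomputable def epsN (d : ℕ) : ℂ := if d % 4 = 1 then 1 else Complex.I

/-- `ε_x = 1` if `x ≡ 1 (mod 4)`, `ε_x = i` if `x ≡ 3 (mod 4)` (for odd `x : ℤ`). -/
noncomputable def epsZ (x : ℤ) : ℂ := if x % 4 = 1 then 1 else Complex.I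

/-!
Write the residues `δ ≡ d (mod c)` in `[0, 4c)` as `δ = d - n c`, with `n` running over four
consecutive integers. Then `a δ = 1 + k c` with `k = b - a n`, and everything is governed by `k`.
Since `(c / 1 + k c) = χ₈(1 + 2k)` for `c ≡ 2 (mod 4)`, the twisted symbol `(c/δ) ε_δ⁻¹` equals
`ε_a⁻¹ (c/a) i^{ak}`. The inverse of `δ` modulo `4c` is `a (1 + k c)`, so
`e((a - δ̄)/4c) = i^{-ak}`, while `e((d - δ)/4c) = i^n`. As `a² ≡ 1 (mod 4)`, `a k ≡ a b - n`,
so the summand is `ε_a⁻¹ (c/a) i^{(ab - n)(1 - α) + n β}`, and summing over `n` modulo `4`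
leaves `4 M_{αβ}`.
-/

open ZMod
open scoped NumberTheorySymbols

lemma I_zpow_congr {m n : ℤ} (h : m ≡ n [ZMOD 4]) : I ^ m = I ^ n := by
  rw [I_zpow_eq_zpow_mod m, I_zpow_eq_zpow_mod n, h]

lemma eE_natCast_mul_div (n : ℕ) (x y : ℂ) : eE (n * x / y) = eE (x / y) ^ n := by
  rw [eE, eE, ← Complex.exp_nat_mul, mul_div_assoc]
  ring_nf

lemma eE_intCast_div {N : ℕ} (hN : N ≠ 0) {m j : ℤ} (h : m ≡ j * N [ZMOD 4 * N]) :
    eE (m / (4 * N)) = I ^ j := by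
  obtain ⟨t, ht⟩ := Int.modEq_iff_dvd.1 h.symm
  have hm : (m : ℂ) = j * N + 4 * N * t := by exact_mod_cast (by linarith : m = j * N + 4 * N * t)
  have harg : 2 * Real.pi * I * (m / (4 * N)) = j * (Real.pi / 2 * I) + t * (2 * Real.pi * I) := by
    rw [hm]; field_simp; ring
  rw [eE, harg, Complex.exp_add, Complex.exp_int_mul, exp_pi_div_two_mul_I,
    Complex.exp_int_mul_two_pi_mul_I, mul_one]

lemma odd_and_odd_of_mul_eq {c : ℕ} (hc : Even c) {x y k : ℤ} (h : x * y = 1 + k * c) :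
    Odd x ∧ Odd y :=
  Int.odd_mul.1 (h ▸ ((by exact_mod_cast hc : Even (c : ℤ)).mul_left k).one_add)

/-- `χ₄ y * y` is the associate of `y` that is `1 (mod 4)`: it absorbs both the sign of `y` and
the reciprocity sign. -/
lemma jacobiSym_two_mul_natAbs {c : ℕ} (hc : Odd c) {y : ℤ} (hy : Odd y) :
    J(((2 * c : ℕ) : ℤ) | y.natAbs) = χ₈ y * J(χ₄ y * y | c) := by
  obtain ⟨n, rfl | rfl⟩ := Int.eq_nat_or_neg y
  all_goals
    have hn : Odd n := by simpa using hy.natAbs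
    simp only [Int.natAbs_neg, Int.natAbs_natCast]
    rw [Nat.cast_mul, Nat.cast_two, jacobiSym.mul_left, jacobiSym.at_two hn,
      jacobiSym.quadratic_reciprocity' hc hn, qrSign, ← jacobiSym.mul_left]
  · push_cast; ring_nf
  · have h8 : χ₈ (-1) = 1 := by decide
    have h4 : χ₄ (-1) = -1 := by decide
    push_cast
    rw [neg_eq_neg_one_mul (n : ZMod 8), neg_eq_neg_one_mul (n : ZMod 4), map_mul, map_mul, h8, h4]
    ring_nf

lemma jacobiSym_natAbs_one_add_mul {c : ℕ} (hc : c % 4 = 2) (k : ℤ) :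
    J(c | (1 + k * c).natAbs) = χ₈ ((1 + 2 * k : ℤ) : ZMod 8) := by
  obtain ⟨c', rfl⟩ : ∃ c', c = 2 * c' := ⟨c / 2, by omega⟩
  have hc' : Odd c' := Nat.odd_iff.2 (by omega)
  set y := 1 + k * ((2 * c' : ℕ) : ℤ) with hy
  have hy1 : y ≡ 1 [ZMOD c'] := Int.modEq_iff_dvd.2 ⟨-(2 * k), by push_cast [hy]; ring⟩
  rw [jacobiSym_two_mul_natAbs hc' ⟨k * c', by push_cast [hy]; ring⟩,
    jacobiSym.mod_left'
      (by simpa only [mul_one] using hy1.mul_left (χ₄ y : ℤ) :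
        χ₄ y * y ≡ χ₄ y [ZMOD c'])]
  have hmod : y % 8 = (1 + 2 * ((k % 4) * ((c' % 4 : ℕ) : ℤ) % 4)) % 8 := by
    have : (k * c') % 4 = (k % 4) * ((c' % 4 : ℕ) : ℤ) % 4 := by
      rw [Int.mul_emod]; push_cast; rfl
    rw [hy, show k * ((2 * c' : ℕ) : ℤ) = 2 * (k * c') by push_cast; ring, ← this]
    omega
  have hc4 : c' % 4 = 1 ∨ c' % 4 = 3 := by rcases hc' with ⟨t, rfl⟩; omega
  have hk4 : k % 4 = 0 ∨ k % 4 = 1 ∨ k % 4 = 2 ∨ k % 4 = 3 := by omega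
  have hneg : J(-1 | c') = if c' % 4 = 1 then 1 else -1 := by
    rw [jacobiSym.at_neg_one hc', χ₄_nat_eq_if_mod_four,
      if_neg (by rcases hc' with ⟨t, rfl⟩; omega)]
  rw [χ₄_int_eq_if_mod_four, χ₈_int_eq_if_mod_eight, χ₈_int_eq_if_mod_eight]
  rcases hc4 with hc4 | hc4 <;> rcases hk4 with hk4 | hk4 | hk4 | hk4 <;>
    rw [hc4, hk4] at hmod <;>
    simp [show y % 2 = 1 by omega, show y % 4 = y % 8 % 4 by omega, hmod,
      show (1 + 2 * k) % 2 = 1 by omega, show (1 + 2 * k) % 8 = 1 + 2 * (k % 4) by omega, hk4,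
      hneg, hc4]

lemma epsZ_inv_mul_χ₈ {x δ k : ℤ} (hx : Odd x) (h : x * δ ≡ 1 + 2 * k [ZMOD 4]) :
    (epsZ δ)⁻¹ * χ₈ ((1 + 2 * k : ℤ) : ZMod 8) = (epsZ x)⁻¹ * I ^ (x * k) := by
  rw [I_zpow_congr ((Int.mod_modEq x 4).symm.mul (Int.mod_modEq k 4).symm)]
  have h4 := (Int.mod_modEq x 4).mul (Int.mod_modEq δ 4) |>.trans h
  unfold Int.ModEq at h4
  have hx4 : x % 4 = 1 ∨ x % 4 = 3 := by rcases hx with ⟨t, rfl⟩; omega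
  have hδ4 : δ % 4 = 0 ∨ δ % 4 = 1 ∨ δ % 4 = 2 ∨ δ % 4 = 3 := by omega
  have hk4 : k % 4 = 0 ∨ k % 4 = 1 ∨ k % 4 = 2 ∨ k % 4 = 3 := by omega
  rw [χ₈_int_eq_if_mod_eight, epsZ, epsZ]
  rcases hx4 with hx4 | hx4 <;> rcases hδ4 with hδ4 | hδ4 | hδ4 | hδ4 <;>
    rcases hk4 with hk4 | hk4 | hk4 | hk4 <;> rw [hx4, hδ4] at h4 <;> (try omega) <;>
    simp [hx4, hδ4, hk4, show (1 + 2 * k) % 2 = 1 by omega,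
      show (1 + 2 * k) % 8 = 1 + 2 * (k % 4) by omega, zpow_ofNat]

lemma epsN_eq_epsZ (n : ℕ) : epsN n = epsZ n := by
  simp only [epsN, epsZ]
  congr 1
  simp only [eq_iff_iff]
  omega

lemma jacobiSym_mul_epsN_inv {c : ℕ} (hc : c % 4 = 2) {x k : ℤ} {δ : ℕ}
    (h : x * δ = 1 + k * c) :
    (J(c | δ) : ℂ) * (epsN δ)⁻¹ = (epsZ x)⁻¹ * J(c | x.natAbs) * I ^ (x * k) := by
  obtain ⟨hx, hδ⟩ := odd_and_odd_of_mul_eq (Nat.even_iff.2 (by omega)) h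
  have hcop : IsCoprime (c : ℤ) x := ⟨-k, δ, by linarith⟩
  have hsq : J(c | x.natAbs) ^ 2 = 1 :=
    jacobiSym.sq_one (by simpa [Int.gcd, Int.natAbs_abs] using Int.isCoprime_iff_gcd_eq_one.1 hcop)
  have hmul : J(c | x.natAbs) * J(c | δ) = χ₈ ((1 + 2 * k : ℤ) : ZMod 8) := by
    rw [← jacobiSym.mul_right' _ (by rintro h0; simp [Int.natAbs_eq_zero.1 h0] at hx)
      (by rintro rfl; simp at hδ), ← Int.natAbs_natCast δ, ← Int.natAbs_mul, h,
      jacobiSym_natAbs_one_add_mul hc]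
  have hJ : J(c | δ) = J(c | x.natAbs) * χ₈ ((1 + 2 * k : ℤ) : ZMod 8) := by
    rw [← hmul, ← mul_assoc, ← sq, hsq, one_mul]
  have h4 : x * δ ≡ 1 + 2 * k [ZMOD 4] := by
    obtain ⟨t, ht⟩ : ∃ t, (c : ℤ) = 4 * t + 2 := ⟨c / 4, by omega⟩
    exact Int.modEq_iff_dvd.2 ⟨-(k * t), by rw [h, ht]; ring⟩
  rw [hJ, epsN_eq_epsZ, Int.cast_mul]
  linear_combination (J(c | x.natAbs) : ℂ) * epsZ_inv_mul_χ₈ hx h4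

lemma inv_natCast_eq_of_mul_eq {c : ℕ} (hc : c % 4 = 2) {x k : ℤ} {δ : ℕ}
    (h : x * δ = 1 + k * c) :
    (δ : ZMod (4 * c))⁻¹ = ((x * (1 + k * c) : ℤ) : ZMod (4 * c)) := by
  -- `δ x (1 + k c) = (1 + k c)² ≡ 1 (mod 4c)` since `k (1 + k c / 2)` is even for odd `c / 2`.
  apply ZMod.inv_eq_of_mul_eq_one
  rw [← Int.cast_natCast, ← Int.cast_mul, ← Int.cast_one (R := ZMod (4 * c)),
    ZMod.intCast_eq_intCast_iff_dvd_sub]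
  obtain ⟨u, hu⟩ : ∃ u, (c : ℤ) = 4 * u + 2 := ⟨c / 4, by omega⟩
  obtain ⟨w, hw⟩ := Int.even_mul_succ_self k
  refine ⟨-(w + u * k ^ 2), ?_⟩
  push_cast
  linear_combination -(1 + k * c) * h - 2 * (c : ℤ) * hw - k ^ 2 * (c : ℤ) * hu

lemma eE_sub_inv_val_div {c : ℕ} (hc : c % 4 = 2) {x k : ℤ} {δ : ℕ}
    (h : x * δ = 1 + k * c) :
    eE ((x - (((δ : ZMod (4 * c))⁻¹).val : ℂ)) / (4 * c)) = I ^ (-(x * k)) := by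
  have : NeZero (4 * c) := ⟨by omega⟩
  have hval : ((((δ : ZMod (4 * c))⁻¹).val : ℤ) : ℂ) =
      ((x * (1 + k * c) % (4 * c) : ℤ) : ℂ) := by
    rw [inv_natCast_eq_of_mul_eq hc h, ZMod.val_intCast]; push_cast; rfl
  rw [← Int.cast_natCast, hval, ← Int.cast_sub, eE_intCast_div (by omega)]
  convert (Int.mod_modEq (x * (1 + k * c)) (4 * c)).sub_left x using 1
  ring

lemma eE_sub_div_of_eq {c : ℕ} (hc : c ≠ 0) {d n : ℤ} {δ : ℕ} (hδ : d = δ + n * c) :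
    eE ((d - δ) / (4 * c)) = I ^ n := by
  rw [← Int.cast_natCast δ, ← Int.cast_sub, eE_intCast_div hc]
  rw [hδ, add_sub_cancel_left]

lemma weil_summand_eq {a b d : ℤ} {c : ℕ} (hc : c % 4 = 2) (hdet : a * d - b * c = 1)
    (α β : Fin 2) {δ : ℕ} {n : ℤ} (hδ : d = δ + n * c) :
    (J(c | δ) : ℂ) * (epsN δ)⁻¹ *
        eE ((α : ℕ) * ((a : ℂ) - (((δ : ZMod (4 * c))⁻¹.val : ℕ) : ℂ)) / (4 * c)) *
        eE ((β : ℕ) * ((d : ℂ) - δ) / (4 * c)) =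
      (epsZ a)⁻¹ * J(c | a.natAbs) * I ^ ((a * b - n) * (1 - (α : ℕ)) + n * (β : ℕ)) := by
  have h : a * δ = 1 + (b - a * n) * c := by linear_combination hdet - a * hδ
  have hI : I ^ (a * (b - a * n)) = I ^ (a * b - n) := by
    obtain ⟨t, rfl⟩ := (odd_and_odd_of_mul_eq (Nat.even_iff.2 (by omega)) h).1
    exact I_zpow_congr (Int.modEq_iff_dvd.2 ⟨(t * t + t) * n, by ring⟩)
  rw [eE_natCast_mul_div, eE_natCast_mul_div, eE_sub_inv_val_div hc h,
    eE_sub_div_of_eq (by omega) hδ, jacobiSym_mul_epsN_inv hc h, zpow_neg, hI, ← zpow_neg,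
    ← zpow_natCast, ← zpow_natCast (I ^ n), ← zpow_mul, ← zpow_mul,
    show (a * b - n) * (1 - (α : ℕ)) + n * (β : ℕ) =
      a * b - n + -(a * b - n) * (α : ℕ) + n * (β : ℕ) by ring,
    zpow_add₀ I_ne_zero, zpow_add₀ I_ne_zero]
  ring

lemma filter_range_four_mul_eq_image {c : ℕ} (hc : c ≠ 0) (hc2 : Even c) {d : ℤ}
    (hd : Odd d) :
    (Finset.range (4 * c)).filter (fun δ : ℕ => δ % 2 = 1 ∧ (δ : ZMod c) = (d : ZMod c)) =
      (Finset.range 4).image (fun j => (d % c).toNat + j * c) := by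
  set r := (d % c).toNat
  have hr : (r : ℤ) = d % c := Int.toNat_of_nonneg (Int.emod_nonneg d (by omega))
  have hrc : r < c := by have := Int.emod_lt_of_pos d (by omega : (0 : ℤ) < c); omega
  have hcast : ∀ δ : ℕ, (δ : ZMod c) = (d : ZMod c) ↔ δ % c = r := by
    intro δ
    rw [← Int.cast_natCast, ZMod.intCast_eq_intCast_iff']
    omega
  have hr2 : r % 2 = 1 := by
    obtain ⟨t, rfl⟩ := hc2
    have : d % ((t + t : ℕ) : ℤ) % 2 = d % 2 :=
      Int.emod_emod_of_dvd d ⟨t, by push_cast; ring⟩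
    rcases hd with ⟨s, rfl⟩; omega
  ext δ
  simp only [Finset.mem_filter, Finset.mem_range, Finset.mem_image, hcast]
  constructor
  · rintro ⟨hδ, -, hδr⟩
    exact ⟨δ / c, (Nat.div_lt_iff_lt_mul (by omega)).2 hδ, by
      rw [← hδr, mul_comm]; exact Nat.mod_add_div δ c⟩
  · rintro ⟨j, hj, rfl⟩
    refine ⟨by nlinarith, ?_, ?_⟩
    · obtain ⟨t, rfl⟩ := hc2
      rw [Nat.add_mod, show j * (t + t) = 2 * (j * t) by ring, Nat.mul_mod_right]; omega
    · rw [Nat.add_mul_mod_self_right, Nat.mod_eq_of_lt hrc]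

lemma sum_range_four_I_zpow (m q : ℤ) (α β : Fin 2) :
    ∑ j ∈ Finset.range 4, I ^ ((m - (q - j)) * (1 - (α : ℕ)) + (q - j) * (β : ℕ)) =
      4 * !![0, I ^ m; 1, 0] α β := by
  have hq : I ^ q ≠ 0 := zpow_ne_zero q I_ne_zero
  fin_cases α <;> fin_cases β <;>
    simp [Finset.sum_range_succ, zpow_sub₀ I_ne_zero] <;> field_simp <;> ring_nf <;> simp [I_sq]

theorem weil_rep_entry_c_two_mod_four_general (a b d : ℤ) (c : ℕ) (hc4 : c % 4 = 2)
    (hdet : a * d - b * (c : ℤ) = 1) (α β : Fin 2) :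
    (epsZ a)⁻¹ * (jacobiSym (c : ℤ) a.natAbs : ℂ) *
        (!![0, Complex.I ^ (a * b); 1, 0] α β) =
      1 / 4 *
        ∑ δ ∈ (Finset.range (4 * c)).filter
            (fun δ : ℕ => δ % 2 = 1 ∧ ((δ : ZMod c) = ((d : ℤ) : ZMod c))),
          (jacobiSym (c : ℤ) δ : ℂ) * (epsN δ)⁻¹ *
            eE (((α : ℕ) : ℂ) * ((a : ℂ) - ((((δ : ZMod (4 * c))⁻¹ : ZMod (4 * c)).val : ℕ) : ℂ)) /
              (4 * (c : ℂ))) *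
            eE (((β : ℕ) : ℂ) * ((d : ℂ) - (δ : ℂ)) / (4 * (c : ℂ))) := by
  have hc0 : c ≠ 0 := by omega
  have hc2 : Even c := ⟨c / 2, by omega⟩
  have hd : Odd d := (odd_and_odd_of_mul_eq hc2 (x := a) (k := b) (by linear_combination hdet)).2
  have hdq : d = (d % c).toNat + d / c * c := by
    rw [Int.toNat_of_nonneg (Int.emod_nonneg d (by omega)), Int.emod_add_ediv_mul]
  rw [filter_range_four_mul_eq_image hc0 hc2 hd,
    Finset.sum_image fun x _ y _ hxy => by simpa [hc0] using hxy,
    Finset.sum_congr rfl fun j _ => weil_summand_eq hc4 hdet α β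
      (δ := (d % c).toNat + j * c) (n := d / c - j) (by push_cast; linear_combination hdq),
    ← Finset.mul_sum, sum_range_four_I_zpow]
  ring

/-- for `γ = (a,b;c,d) ∈ SL₂(ℤ)` with `c > 0`, `c ≡ 2 (mod 4)`,
`α β ∈ {0,1}`, and `M = [[0, i^{ab}],[1, 0]]`, one has
`ε_a⁻¹ (c/a) M_{αβ}
  = (1/4) ∑_{δ (mod 4c), δ odd, δ ≡ d (mod c)} (c/δ) ε_δ⁻¹ e(α(a-δ̄)/(4c)) e(β(d-δ)/(4c))`,
where `δ̄` is the inverse of `δ` modulo `4c`. -/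
theorem weil_rep_entry_c_two_mod_four (a b d : ℤ) (c : ℕ) (hc : 0 < c) (hc4 : c % 4 = 2)
    (hdet : a * d - b * (c : ℤ) = 1) (α β : Fin 2) :
    (epsZ a)⁻¹ * (jacobiSym (c : ℤ) a.natAbs : ℂ) *
        (!![0, Complex.I ^ (a * b); 1, 0] α β) =
      1 / 4 *
        ∑ δ ∈ (Finset.range (4 * c)).filter
            (fun δ : ℕ => δ % 2 = 1 ∧ ((δ : ZMod c) = ((d : ℤ) : ZMod c))),
          (jacobiSym (c : ℤ) δ : ℂ) * (epsN δ)⁻¹ *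
            eE (((α : ℕ) : ℂ) * ((a : ℂ) - ((((δ : ZMod (4 * c))⁻¹ : ZMod (4 * c)).val : ℕ) : ℂ)) /
              (4 * (c : ℂ))) *
            eE (((β : ℕ) : ℂ) * ((d : ℂ) - (δ : ℂ)) / (4 * (c : ℂ))) :=
  weil_rep_entry_c_two_mod_four_general a b d c hc4 hdet α β
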